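/- If an automorphism φ ∈ G conjugates the unipotent Jonquières group into itself, i.e. φ ∘ u ∘ φ⁻¹ ∈ Jonq_u(n) for every u ∈ Jonq_u(n), then φ ∈ Jonq(n). -/

import Mathlib

open MvPolynomial

noncomputable section

variable (k : Type*) [Field k] (n : ℕ)

/-- `Asub k n j` is the subalgebra of `k[x_1,…,x_n]` generated by the first `j` variables
`x_1, …, x_j`  (so `Asub k n 0 = k` and `Asub k n n` is everything). -/
def Asub (j : ℕ) : Subalgebra k (MvPolynomial (Fin n) k) :=
  Algebra.adjoin k {P | ∃ i : Fin n, (i : ℕ) < j ∧ P = X i}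

/-- The Jonquières subgroup of the automorphism group of affine `n`-space:
all `k`-algebra automorphisms `φ` of `k[x_1,…,x_n]` with `φ (Asub k n j) = Asub k n j`
for every `j = 1, …, n` (the condition for `j = 0` holds trivially). -/
def Jonq : Subgroup (MvPolynomial (Fin n) k ≃ₐ[k] MvPolynomial (Fin n) k) where
  carrier := {φ | ∀ j ≤ n,
    (Asub k n j).map (φ : MvPolynomial (Fin n) k →ₐ[k] MvPolynomial (Fin n) k) = Asub k n j}
  one_mem' := by
    intro j _
    have h : ((1 : MvPolynomial (Fin n) k ≃ₐ[k] MvPolynomial (Fin n) k) :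
        MvPolynomial (Fin n) k →ₐ[k] MvPolynomial (Fin n) k) = AlgHom.id k _ := by
      ext x; rfl
    rw [h, Subalgebra.map_id]
  mul_mem' := by
    intro φ ψ hφ hψ j hj
    have h : ((φ * ψ : MvPolynomial (Fin n) k ≃ₐ[k] MvPolynomial (Fin n) k) :
        MvPolynomial (Fin n) k →ₐ[k] MvPolynomial (Fin n) k)
        = (φ : MvPolynomial (Fin n) k →ₐ[k] MvPolynomial (Fin n) k).comp
          (ψ : MvPolynomial (Fin n) k →ₐ[k] MvPolynomial (Fin n) k) := by
      ext x; rfl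
    rw [h, ← Subalgebra.map_map, hψ j hj, hφ j hj]
  inv_mem' := by
    intro φ hφ j hj
    conv_lhs => rw [← hφ j hj]
    rw [Subalgebra.map_map]
    have h : ((φ⁻¹ : MvPolynomial (Fin n) k ≃ₐ[k] MvPolynomial (Fin n) k) :
          MvPolynomial (Fin n) k →ₐ[k] MvPolynomial (Fin n) k).comp
          (φ : MvPolynomial (Fin n) k →ₐ[k] MvPolynomial (Fin n) k) = AlgHom.id k _ := by
      exact AlgHom.ext fun x => φ.symm_apply_apply x
    rw [h, Subalgebra.map_id]

lemma mem_Jonq_iff (φ : MvPolynomial (Fin n) k ≃ₐ[k] MvPolynomial (Fin n) k) :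
    φ ∈ Jonq k n ↔ ∀ j ≤ n,
      (Asub k n j).map (φ : MvPolynomial (Fin n) k →ₐ[k] MvPolynomial (Fin n) k)
        = Asub k n j :=
  Iff.rfl

/-- The unipotent Jonquières subgroup: those `φ` in the Jonquières subgroup with
`φ (x_i) - x_i ∈ Asub k n (i-1)` for every `i = 1, …, n` (zero-indexed below). -/
def JonqU : Subgroup (MvPolynomial (Fin n) k ≃ₐ[k] MvPolynomial (Fin n) k) where
  carrier := {φ | φ ∈ Jonq k n ∧ ∀ i : Fin n, φ (X i) - X i ∈ Asub k n (i : ℕ)}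
  one_mem' := ⟨(Jonq k n).one_mem, fun i => by
    simpa using (Asub k n (i : ℕ)).zero_mem⟩
  mul_mem' := by
    rintro φ ψ ⟨hφJ, hφU⟩ ⟨hψJ, hψU⟩
    refine ⟨(Jonq k n).mul_mem hφJ hψJ, fun i => ?_⟩
    have h1 : φ (ψ (X i) - X i) ∈ Asub k n (i : ℕ) := by
      have h := (mem_Jonq_iff k n φ).mp hφJ (i : ℕ) (le_of_lt i.isLt)
      rw [← h]
      exact Subalgebra.mem_map.mpr ⟨_, hψU i, rfl⟩
    have h2 : (φ * ψ) (X i) - X i = φ (ψ (X i) - X i) + (φ (X i) - X i) := by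
      rw [AlgEquiv.mul_apply, map_sub]; ring
    rw [h2]
    exact add_mem h1 (hφU i)
  inv_mem' := by
    rintro φ ⟨hφJ, hφU⟩
    refine ⟨(Jonq k n).inv_mem hφJ, fun i => ?_⟩
    have h1 : φ⁻¹ (φ (X i) - X i) ∈ Asub k n (i : ℕ) := by
      have h := (mem_Jonq_iff k n φ⁻¹).mp ((Jonq k n).inv_mem hφJ) (i : ℕ) (le_of_lt i.isLt)
      rw [← h]
      exact Subalgebra.mem_map.mpr ⟨_, hφU i, rfl⟩
    have h2 : φ⁻¹ (X i) - X i = -(φ⁻¹ (φ (X i) - X i)) := by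
      rw [map_sub]
      have h : φ⁻¹ (φ (X i)) = X i := φ.symm_apply_apply (X i)
      rw [h]; ring
    rw [h2]
    exact neg_mem h1

lemma Asub_eq_supported (j : ℕ) :
    Asub k n j = MvPolynomial.supported k {i : Fin n | (i : ℕ) < j} := by
  unfold Asub MvPolynomial.supported
  congr 1
  ext P
  constructor
  · rintro ⟨i, hi, rfl⟩; exact ⟨i, hi, rfl⟩
  · rintro ⟨i, hi, rfl⟩; exact ⟨i, hi, rfl⟩

lemma Asub_mono {j j' : ℕ} (h : j ≤ j') : Asub k n j ≤ Asub k n j' := by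
  apply Algebra.adjoin_mono
  rintro P ⟨i, hi, rfl⟩; exact ⟨i, lt_of_lt_of_le hi h, rfl⟩

lemma mem_Asub_iff_vars {j : ℕ} {p : MvPolynomial (Fin n) k} :
    p ∈ Asub k n j ↔ ∀ l ∈ p.vars, (l : ℕ) < j := by
  rw [Asub_eq_supported, MvPolynomial.mem_supported]
  constructor
  · intro h l hl; exact h hl
  · intro h l hl; exact h l hl

lemma X_mem_Asub {j : ℕ} {l : Fin n} (h : (l : ℕ) < j) : X l ∈ Asub k n j :=
  Algebra.subset_adjoin ⟨l, h, rfl⟩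

lemma X_not_mem_Asub {j : ℕ} {l : Fin n} (h : j ≤ (l : ℕ)) : X l ∉ Asub k n j := by
  rw [mem_Asub_iff_vars]
  intro hc
  have := hc l (by rw [vars_X]; simp)
  omega

lemma coeff_zero_of_mem_Asub {j : ℕ} {p : MvPolynomial (Fin n) k} (hp : p ∈ Asub k n j)
    {m : Fin n →₀ ℕ} {l : Fin n} (hl : j ≤ (l : ℕ)) (hml : m l ≠ 0) :
    MvPolynomial.coeff m p = 0 := by
  by_contra hc
  have hm : m ∈ p.support := MvPolynomial.mem_support_iff.mpr hc
  have : l ∈ p.vars := (MvPolynomial.mem_vars l).mpr ⟨m, hm, Finsupp.mem_support_iff.mpr hml⟩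
  have := (mem_Asub_iff_vars k n).mp hp l this
  omega

lemma Asub_top : Asub k n n = ⊤ := by
  rw [Asub_eq_supported]
  have : {i : Fin n | (i : ℕ) < n} = Set.univ := by
    ext i; simp [i.isLt]
  rw [this]
  simp [MvPolynomial.supported_univ]
lemma aeval_update_zero_mem (j : Fin n) (g : MvPolynomial (Fin n) k) :
    aeval (Function.update X j (0 : MvPolynomial (Fin n) k)) g ∈
      MvPolynomial.supported k ({j}ᶜ : Set (Fin n)) := by
  have hv : ∀ l : Fin n, Function.update X j (0 : MvPolynomial (Fin n) k) l ∈
      MvPolynomial.supported k ({j}ᶜ : Set (Fin n)) := by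
    intro l
    by_cases hl : l = j
    · subst hl
      simp only [Function.update_self]
      exact Subalgebra.zero_mem _
    · rw [Function.update_of_ne hl]
      exact (MvPolynomial.X_mem_supported.mpr (by simpa using hl))
  let v : Fin n → MvPolynomial.supported k ({j}ᶜ : Set (Fin n)) := fun l => ⟨_, hv l⟩
  have : aeval (Function.update X j (0 : MvPolynomial (Fin n) k)) =
      (MvPolynomial.supported k ({j}ᶜ : Set (Fin n))).val.comp (aeval v) := by
    apply MvPolynomial.algHom_ext
    intro l
    simp [v]
  rw [this]
  exact ((aeval v) g).2

/-- substitution `x_j ↦ x_j + f`, other variables fixed -/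
def shiftHom (j : Fin n) (f : MvPolynomial (Fin n) k) :
    MvPolynomial (Fin n) k →ₐ[k] MvPolynomial (Fin n) k :=
  aeval (Function.update X j (X j + f))

lemma shiftHom_X_self (j : Fin n) (f : MvPolynomial (Fin n) k) :
    shiftHom k n j f (X j) = X j + f := by
  simp [shiftHom]

lemma shiftHom_X_ne (j : Fin n) (f : MvPolynomial (Fin n) k) {l : Fin n} (h : l ≠ j) :
    shiftHom k n j f (X l) = X l := by
  simp [shiftHom, Function.update_of_ne h]

lemma shiftHom_fix {j : Fin n} (f : MvPolynomial (Fin n) k) {m : ℕ} (hm : m ≤ (j : ℕ))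
    {p : MvPolynomial (Fin n) k} (hp : p ∈ Asub k n m) :
    shiftHom k n j f p = p := by
  have : Asub k n m ≤ AlgHom.equalizer (shiftHom k n j f) (AlgHom.id k _) := by
    rw [Asub, Algebra.adjoin_le_iff]
    rintro P ⟨i, hi, rfl⟩
    have : i ≠ j := by intro hc; subst hc; omega
    show shiftHom k n j f (X i) = X i
    exact shiftHom_X_ne k n j f this
  exact this hp

lemma shiftHom_comp (j : Fin n) (f g : MvPolynomial (Fin n) k) (hf : f ∈ Asub k n (j : ℕ))
    (hg : g ∈ Asub k n (j : ℕ)) :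
    (shiftHom k n j f).comp (shiftHom k n j g) = shiftHom k n j (f + g) := by
  apply MvPolynomial.algHom_ext
  intro l
  by_cases hl : l = j
  · subst hl
    simp only [AlgHom.comp_apply, shiftHom_X_self, map_add, shiftHom_X_self]
    rw [shiftHom_fix k n f le_rfl hg]
    ring
  · simp [AlgHom.comp_apply, shiftHom_X_ne k n _ _ hl]

lemma shiftHom_zero (j : Fin n) : shiftHom k n j 0 = AlgHom.id k _ := by
  apply MvPolynomial.algHom_ext
  intro l
  by_cases hl : l = j
  · subst hl; simp [shiftHom_X_self]
  · simp [shiftHom_X_ne k n _ _ hl]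

/-- the shift as an algebra automorphism, for `f ∈ A_{j-1}` -/
def shiftEquiv (j : Fin n) (f : MvPolynomial (Fin n) k) (hf : f ∈ Asub k n (j : ℕ)) :
    MvPolynomial (Fin n) k ≃ₐ[k] MvPolynomial (Fin n) k :=
  AlgEquiv.ofAlgHom (shiftHom k n j f) (shiftHom k n j (-f))
    (by rw [shiftHom_comp k n j f (-f) hf (neg_mem hf)]; simp [shiftHom_zero])
    (by rw [shiftHom_comp k n j (-f) f (neg_mem hf) hf]; simp [shiftHom_zero])

lemma shiftEquiv_apply (j : Fin n) (f : MvPolynomial (Fin n) k) (hf : f ∈ Asub k n (j : ℕ))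
    (p : MvPolynomial (Fin n) k) :
    shiftEquiv k n j f hf p = shiftHom k n j f p := rfl

lemma shiftHom_map_le (j : Fin n) (f : MvPolynomial (Fin n) k) (hf : f ∈ Asub k n (j : ℕ))
    (m : ℕ) :
    (Asub k n m).map (shiftHom k n j f) ≤ Asub k n m := by
  rw [Asub, AlgHom.map_adjoin, Algebra.adjoin_le_iff]
  rintro P ⟨Q, ⟨i, hi, rfl⟩, rfl⟩
  by_cases hij : i = j
  · subst hij
    rw [shiftHom_X_self]
    exact add_mem (X_mem_Asub k n hi) (Asub_mono k n (le_of_lt hi) hf)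
  · rw [shiftHom_X_ne k n _ _ hij]
    exact X_mem_Asub k n hi

lemma shiftEquiv_mem_JonqU (j : Fin n) (f : MvPolynomial (Fin n) k)
    (hf : f ∈ Asub k n (j : ℕ)) :
    shiftEquiv k n j f hf ∈ JonqU k n := by
  constructor
  · intro m hm
    apply le_antisymm
    · exact shiftHom_map_le k n j f hf m
    · intro p hp
      refine ⟨shiftHom k n j (-f) p, ?_, ?_⟩
      · exact shiftHom_map_le k n j (-f) (neg_mem hf) m ⟨p, hp, rfl⟩
      · show (shiftHom k n j f) (shiftHom k n j (-f) p) = p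
        rw [← AlgHom.comp_apply, shiftHom_comp k n j f (-f) hf (neg_mem hf)]
        simp [shiftHom_zero]
  · intro i
    by_cases hij : i = j
    · subst hij
      rw [shiftEquiv_apply, shiftHom_X_self]
      simpa using hf
    · rw [shiftEquiv_apply, shiftHom_X_ne k n _ _ hij]
      simpa using (Asub k n (i : ℕ)).zero_mem
lemma coeff_mem_of_eval_mem [Infinite k] (V : Submodule k (MvPolynomial (Fin n) k)) :
    ∀ (d : ℕ) (Q : Polynomial (MvPolynomial (Fin n) k)) (F : Finset k), Q.natDegree ≤ d →
      (∀ c ∉ F, Q.eval (MvPolynomial.C c) ∈ V) → ∀ s, Q.coeff s ∈ V := by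
  classical
  intro d
  induction d with
  | zero =>
    intro Q F hdeg hval s
    obtain ⟨c, hc⟩ := F.exists_notMem
    have hQ : Q = Polynomial.C (Q.coeff 0) := Polynomial.eq_C_of_natDegree_le_zero hdeg
    have h0 : Q.coeff 0 ∈ V := by
      have := hval c hc
      rwa [hQ, Polynomial.eval_C] at this
    rcases Nat.eq_zero_or_pos s with hs | hs
    · rwa [hs]
    · rw [hQ, Polynomial.coeff_C, if_neg (by omega)]
      exact V.zero_mem
  | succ d ih =>
    intro Q F hdeg hval s
    obtain ⟨μ, hμ⟩ := F.exists_notMem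
    have haV : Q.eval (MvPolynomial.C μ) ∈ V := hval μ hμ
    set a := Q.eval (MvPolynomial.C μ) with ha
    by_cases hQa : Q - Polynomial.C a = 0
    · have hQ : Q = Polynomial.C a := by rwa [sub_eq_zero] at hQa
      rcases Nat.eq_zero_or_pos s with hs | hs
      · rw [hs, hQ, Polynomial.coeff_C_zero]; exact haV
      · rw [hQ, Polynomial.coeff_C, if_neg (by omega)]; exact V.zero_mem
    · have hroot : (Q - Polynomial.C a).IsRoot (MvPolynomial.C μ) := by
        simp [Polynomial.IsRoot, ha]
      obtain ⟨Q₂, hQ₂⟩ := (Polynomial.dvd_iff_isRoot.mpr hroot)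
      have hQ₂ne : Q₂ ≠ 0 := by
        intro hc; rw [hc, mul_zero] at hQ₂; exact hQa hQ₂
      have hXC : (Polynomial.X - Polynomial.C (MvPolynomial.C μ) :
          Polynomial (MvPolynomial (Fin n) k)) ≠ 0 := Polynomial.X_sub_C_ne_zero _
      have hdeg2 : Q₂.natDegree ≤ d := by
        have h1 : (Q - Polynomial.C a).natDegree = Q₂.natDegree + 1 := by
          rw [hQ₂, Polynomial.natDegree_mul hXC hQ₂ne, Polynomial.natDegree_X_sub_C]
          omega
        have h2 : (Q - Polynomial.C a).natDegree ≤ d + 1 := by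
          rw [Polynomial.natDegree_sub_C]; exact hdeg
        omega
      have hval2 : ∀ c ∉ F ∪ {μ}, Q₂.eval (MvPolynomial.C c) ∈ V := by
        intro c hc
        rw [Finset.mem_union, Finset.mem_singleton] at hc
        push_neg at hc
        have h1 : Q.eval (MvPolynomial.C c) - a =
            MvPolynomial.C (c - μ) * Q₂.eval (MvPolynomial.C c) := by
          have := congrArg (Polynomial.eval (MvPolynomial.C c)) hQ₂
          simpa [map_sub] using this
        have h2 : Q₂.eval (MvPolynomial.C c) =
            (c - μ)⁻¹ • (Q.eval (MvPolynomial.C c) - a) := by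
          rw [h1, MvPolynomial.C_mul', ← smul_assoc]
          rw [smul_eq_mul, inv_mul_cancel₀ (sub_ne_zero.mpr hc.2), one_smul]
        rw [h2]
        exact V.smul_mem _ (V.sub_mem (hval c hc.1) haV)
      have hc2 : ∀ t, Q₂.coeff t ∈ V := ih Q₂ (F ∪ {μ}) hdeg2 hval2
      have hQeq : Q = Polynomial.C a +
          (Polynomial.X - Polynomial.C (MvPolynomial.C μ)) * Q₂ := by
        rw [← hQ₂]; ring
      rw [hQeq]
      rw [Polynomial.coeff_add, sub_mul, Polynomial.coeff_sub]
      refine V.add_mem ?_ (V.sub_mem ?_ ?_)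
      · rcases Nat.eq_zero_or_pos s with hs | hs
        · rw [hs, Polynomial.coeff_C_zero]; exact haV
        · rw [Polynomial.coeff_C, if_neg (by omega)]; exact V.zero_mem
      · rcases Nat.eq_zero_or_pos s with hs | hs
        · rw [hs]; simpa using V.zero_mem
        · obtain ⟨t, rfl⟩ := Nat.exists_eq_add_of_lt hs
          rw [zero_add, Polynomial.coeff_X_mul]
          exact hc2 t
      · rw [Polynomial.coeff_C_mul, MvPolynomial.C_mul']
        exact V.smul_mem _ (hc2 s)
/-- `x_j ↦ x_j + y`, other variables to themselves, landing in `R[y]`. -/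
def phiHom (j : Fin n) :
    MvPolynomial (Fin n) k →ₐ[k] Polynomial (MvPolynomial (Fin n) k) :=
  aeval (Function.update (fun m => Polynomial.C (X m)) j
    (Polynomial.C (X j) + Polynomial.X))

lemma eval_phiHom (j : Fin n) (t : MvPolynomial (Fin n) k) (g : MvPolynomial (Fin n) k) :
    Polynomial.eval t (phiHom k n j g) = shiftHom k n j t g := by
  have : ((Polynomial.aeval t).restrictScalars k).comp (phiHom k n j) = shiftHom k n j t := by
    apply MvPolynomial.algHom_ext
    intro l
    by_cases hl : l = j
    · subst hl
      simp [phiHom, shiftHom_X_self]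
    · simp [phiHom, Function.update_of_ne hl, shiftHom_X_ne k n _ _ hl]
  have h2 := congrArg (fun F => F g) this
  simpa [Polynomial.aeval_def, Polynomial.eval₂_eq_eval_map] using h2
lemma key_extraction [Infinite k] (i j : Fin n) (hij : (i : ℕ) < (j : ℕ))
    (g : MvPolynomial (Fin n) k)
    (H : ∀ f ∈ Asub k n (j : ℕ), shiftHom k n j f g - g ∈ Asub k n (i : ℕ)) :
    ∀ m ∈ g.support, m j = 0 := by
  set Q := phiHom k n j g with hQdef
  have hc0 : Q.coeff 0 = g := by
    rw [Polynomial.coeff_zero_eq_eval_zero, eval_phiHom, shiftHom_zero]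
    rfl
  -- all higher coefficients lie in Asub i
  have hcs : ∀ s, s ≠ 0 → Q.coeff s ∈ Asub k n (i : ℕ) := by
    intro s hs
    have hco := coeff_mem_of_eval_mem k n (Subalgebra.toSubmodule (Asub k n (i : ℕ)))
      ((Q - Polynomial.C g).natDegree) (Q - Polynomial.C g) ∅ le_rfl ?_ s
    · rw [Polynomial.coeff_sub, Polynomial.coeff_C, if_neg hs, sub_zero] at hco
      exact hco
    · intro c _
      rw [Polynomial.eval_sub, Polynomial.eval_C, eval_phiHom]
      show _ ∈ Asub k n (i : ℕ)
      exact H (MvPolynomial.C c) (by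
        rw [← MvPolynomial.algebraMap_eq]; exact Subalgebra.algebraMap_mem _ c)
  have hE : Polynomial.eval (X i) Q - g ∈ Asub k n (i : ℕ) := by
    rw [eval_phiHom]
    exact H (X i) (X_mem_Asub k n hij)
  -- all higher coefficients vanish
  have hvanish : ∀ s, s ≠ 0 → Q.coeff s = 0 := by
    intro s0 hs0
    by_cases hbig : Q.natDegree < s0
    · exact Polynomial.coeff_eq_zero_of_natDegree_lt hbig
    push_neg at hbig
    by_contra hne
    obtain ⟨m', hm'⟩ := MvPolynomial.ne_zero_iff.mp hne
    have hm'i : m' i = 0 := by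
      by_contra hmi
      exact hm' (coeff_zero_of_mem_Asub k n (hcs s0 hs0) le_rfl hmi)
    set μ : Fin n →₀ ℕ := m' + Finsupp.single i s0 with hμdef
    have hμi : μ i = s0 := by simp [hμdef, hm'i]
    -- coefficient of μ in eval (X i) Q
    have heval : Polynomial.eval (X i) Q =
        ∑ s ∈ Finset.range (Q.natDegree + 1), Q.coeff s * (X i) ^ s := by
      rw [Polynomial.eval_eq_sum_range]
    have hterm : ∀ s ∈ Finset.range (Q.natDegree + 1),
        MvPolynomial.coeff μ (Q.coeff s * (X i) ^ s) =
          (if s = 0 then MvPolynomial.coeff μ g else 0) +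
          (if s = s0 then MvPolynomial.coeff m' (Q.coeff s0) else 0) := by
      intro s _
      rw [MvPolynomial.X_pow_eq_monomial, MvPolynomial.coeff_mul_monomial']
      rcases Nat.eq_zero_or_pos s with hs | hspos
      · subst hs
        rw [if_pos (by simp), if_pos rfl, if_neg (Ne.symm hs0)]
        simp [hc0]
      rcases lt_trichotomy s s0 with hlt | heq | hgt
      · rw [if_neg (show ¬s = 0 by omega), if_neg (show ¬s = s0 by omega), add_zero]
        rw [if_pos (show Finsupp.single i s ≤ μ by
          rw [Finsupp.single_le_iff, hμi]; omega)]
        apply mul_eq_zero_of_left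
        apply coeff_zero_of_mem_Asub k n (hcs s (by omega)) le_rfl
        have : (μ - Finsupp.single i s) i = s0 - s := by
          simp [hμdef, hm'i]
        rw [this]; omega
      · subst heq
        rw [if_neg (show ¬s = 0 by omega), if_pos rfl, zero_add]
        rw [if_pos (show Finsupp.single i s ≤ μ by rw [Finsupp.single_le_iff, hμi])]
        have : μ - Finsupp.single i s = m' := by
          rw [hμdef]; ext l; by_cases hl : l = i
          · subst hl; simp [hm'i]
          · simp [Finsupp.single_apply, hl, Ne.symm hl]
        rw [this, mul_one]
      · rw [if_neg (show ¬s = 0 by omega), if_neg (show ¬s = s0 by omega), add_zero]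
        rw [if_neg (show ¬Finsupp.single i s ≤ μ by rw [Finsupp.single_le_iff, hμi]; omega)]
    have hsum : MvPolynomial.coeff μ (Polynomial.eval (X i) Q) =
        MvPolynomial.coeff μ g + MvPolynomial.coeff m' (Q.coeff s0) := by
      rw [heval, MvPolynomial.coeff_sum, Finset.sum_congr rfl hterm, Finset.sum_add_distrib]
      rw [Finset.sum_ite_eq' (Finset.range (Q.natDegree + 1)) 0,
        Finset.sum_ite_eq' (Finset.range (Q.natDegree + 1)) s0]
      rw [if_pos (by simp), if_pos (by simp; omega)]
    have hzero : MvPolynomial.coeff μ (Polynomial.eval (X i) Q - g) = 0 :=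
      coeff_zero_of_mem_Asub k n hE le_rfl (by rw [hμi]; exact hs0)
    rw [MvPolynomial.coeff_sub, hsum] at hzero
    simp only [add_sub_cancel_left] at hzero
    exact hm' hzero
  -- hence Q is constant, so g does not involve x_j
  have hQC : Q = Polynomial.C g := by
    apply Polynomial.ext
    intro s
    rcases Nat.eq_zero_or_pos s with hs | hs
    · subst hs; simp [hc0]
    · rw [hvanish s (by omega), Polynomial.coeff_C, if_neg (by omega)]
  have hfix : aeval (Function.update X j (0 : MvPolynomial (Fin n) k)) g = g := by
    have h1 : shiftHom k n j (-(X j)) g = g := by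
      rw [← eval_phiHom, ← hQdef, hQC, Polynomial.eval_C]
    have h2 : shiftHom k n j (-(X j)) =
        aeval (Function.update X j (0 : MvPolynomial (Fin n) k)) := by
      apply MvPolynomial.algHom_ext
      intro l
      by_cases hl : l = j
      · subst hl; simp [shiftHom_X_self]
      · simp [shiftHom_X_ne k n _ _ hl, Function.update_of_ne hl]
    rw [← h2]; exact h1
  have hsupp : g ∈ MvPolynomial.supported k ({j}ᶜ : Set (Fin n)) := by
    rw [← hfix]; exact aeval_update_zero_mem k n j g
  intro m hm
  by_contra hmj
  have hj : j ∈ g.vars := (MvPolynomial.mem_vars j).mpr ⟨m, hm, Finsupp.mem_support_iff.mpr hmj⟩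
  have := (MvPolynomial.mem_supported.mp hsupp) hj
  simp at this
lemma polyEval_mem (S : Subalgebra k (MvPolynomial (Fin n) k))
    (q : Polynomial (MvPolynomial (Fin n) k)) (hq : ∀ t, q.coeff t ∈ S)
    {x : MvPolynomial (Fin n) k} (hx : x ∈ S) : q.eval x ∈ S := by
  rw [Polynomial.eval_eq_sum_range]
  exact Subalgebra.sum_mem _ fun s _ => mul_mem (hq s) (pow_mem hx s)

/-- `x_j ↦ y`, other variables to themselves (as constants), landing in `R[y]`. -/
def thetaHom (j : Fin n) :
    MvPolynomial (Fin n) k →ₐ[k] Polynomial (MvPolynomial (Fin n) k) :=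
  aeval (Function.update (fun m => Polynomial.C (X m)) j Polynomial.X)

lemma thetaHom_C_of_mem {j : Fin n} {p : MvPolynomial (Fin n) k}
    (hp : p ∈ Asub k n (j : ℕ)) : thetaHom k n j p = Polynomial.C p := by
  have : Asub k n (j : ℕ) ≤ AlgHom.equalizer (thetaHom k n j)
      ((IsScalarTower.toAlgHom k (MvPolynomial (Fin n) k)
        (Polynomial (MvPolynomial (Fin n) k)))) := by
    rw [Asub, Algebra.adjoin_le_iff]
    rintro P ⟨i, hi, rfl⟩
    have hij : i ≠ j := fun hc => by subst hc; omega
    rw [SetLike.mem_coe, AlgHom.mem_equalizer]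
    show thetaHom k n j (X i) = algebraMap (MvPolynomial (Fin n) k) _ (X i)
    rw [thetaHom, aeval_X, Function.update_of_ne hij]
    rfl
  have h2 := this hp
  have h3 : algebraMap (MvPolynomial (Fin n) k)
      (Polynomial (MvPolynomial (Fin n) k)) p = Polynomial.C p := rfl
  rw [← h3]
  exact h2

lemma eval_thetaHom_X (j : Fin n) (g : MvPolynomial (Fin n) k) :
    Polynomial.eval (X j) (thetaHom k n j g) = g := by
  have : ((Polynomial.aeval (X j : MvPolynomial (Fin n) k)).restrictScalars k).comp
      (thetaHom k n j) = AlgHom.id k _ := by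
    apply MvPolynomial.algHom_ext
    intro l
    by_cases hl : l = j
    · subst hl; simp [thetaHom]
    · simp [thetaHom, Function.update_of_ne hl]
  have h2 := congrArg (fun F => F g) this
  simpa [Polynomial.aeval_def, Polynomial.eval₂_eq_eval_map] using h2

lemma eval_thetaHom_zero (j : Fin n) (g : MvPolynomial (Fin n) k) :
    Polynomial.eval 0 (thetaHom k n j g) =
      aeval (Function.update X j (0 : MvPolynomial (Fin n) k)) g := by
  have : ((Polynomial.aeval (0 : MvPolynomial (Fin n) k)).restrictScalars k).comp
      (thetaHom k n j) = aeval (Function.update X j (0 : MvPolynomial (Fin n) k)) := by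
    apply MvPolynomial.algHom_ext
    intro l
    by_cases hl : l = j
    · subst hl; simp [thetaHom]
    · simp [thetaHom, Function.update_of_ne hl]
  have h2 := congrArg (fun F => F g) this
  simpa [Polynomial.aeval_def, Polynomial.eval₂_eq_eval_map] using h2

/-- if `Θ_j f` is a constant polynomial and `f ∈ A_{j+1}` then `f ∈ A_j`. -/
lemma mem_Asub_of_thetaHom_natDegree_zero {j : ℕ} {jF : Fin n} (hjF : (jF : ℕ) = j)
    {f : MvPolynomial (Fin n) k} (hf : f ∈ Asub k n (j + 1))
    (hdeg : (thetaHom k n jF f).natDegree = 0) : f ∈ Asub k n j := by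
  have hC : thetaHom k n jF f = Polynomial.C ((thetaHom k n jF f).coeff 0) :=
    Polynomial.eq_C_of_natDegree_le_zero (le_of_eq hdeg)
  have h1 : f = (thetaHom k n jF f).coeff 0 := by
    conv_lhs => rw [← eval_thetaHom_X k n jF f, hC, Polynomial.eval_C]
  have h2 : aeval (Function.update X jF (0 : MvPolynomial (Fin n) k)) f = f := by
    conv_rhs => rw [h1]
    conv_lhs => rw [← eval_thetaHom_zero, hC, Polynomial.eval_C]
  have hsupp : f ∈ MvPolynomial.supported k ({jF}ᶜ : Set (Fin n)) := by
    rw [← h2]; exact aeval_update_zero_mem k n jF f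
  rw [mem_Asub_iff_vars]
  intro l hl
  have hl1 := (mem_Asub_iff_vars k n).mp hf l hl
  have hl2 := (MvPolynomial.mem_supported.mp hsupp) hl
  simp only [Set.mem_compl_iff, Set.mem_singleton_iff] at hl2
  have : (l : ℕ) ≠ j := by
    intro hc; apply hl2; apply Fin.ext; omega
  omega

/-- every element of `A_{j+1}` is a polynomial in `x_j` with coefficients in `A_j` -/
lemma exists_poly_of_mem_Asub_succ {j : ℕ} {jF : Fin n} (hjF : (jF : ℕ) = j)
    {g : MvPolynomial (Fin n) k} (hg : g ∈ Asub k n (j + 1)) :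
    ∃ p : Polynomial (MvPolynomial (Fin n) k),
      (∀ t, p.coeff t ∈ Asub k n j) ∧ p.eval (X jF) = g := by
  induction hg using Algebra.adjoin_induction with
  | mem P hP =>
    obtain ⟨i, hi, rfl⟩ := hP
    by_cases hij : i = jF
    · subst hij
      refine ⟨Polynomial.X, fun t => ?_, by simp⟩
      rcases Nat.eq_zero_or_pos t with ht | ht
      · subst ht
        simpa using Subalgebra.zero_mem _
      · by_cases ht1 : t = 1
        · subst ht1; simpa using Subalgebra.one_mem _
        · rw [Polynomial.coeff_X, if_neg (Ne.symm ht1)]; exact Subalgebra.zero_mem _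
    · have : (i : ℕ) < j := by
        have : (i : ℕ) ≠ j := fun hc => hij (Fin.ext (by omega))
        omega
      refine ⟨Polynomial.C (X i), fun t => ?_, by simp⟩
      rcases Nat.eq_zero_or_pos t with ht | ht
      · subst ht; simpa using X_mem_Asub k n this
      · rw [Polynomial.coeff_C, if_neg (by omega)]; exact Subalgebra.zero_mem _
  | algebraMap r =>
    refine ⟨Polynomial.C (MvPolynomial.C r), fun t => ?_, by simp [MvPolynomial.algebraMap_eq]⟩
    rcases Nat.eq_zero_or_pos t with ht | ht
    · subst ht
      simpa using (by rw [← MvPolynomial.algebraMap_eq]; exact Subalgebra.algebraMap_mem _ r :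
        MvPolynomial.C r ∈ Asub k n j)
    · rw [Polynomial.coeff_C, if_neg (by omega)]; exact Subalgebra.zero_mem _
  | add x y hx hy ihx ihy =>
    obtain ⟨p, hp, rfl⟩ := ihx
    obtain ⟨q, hq, rfl⟩ := ihy
    exact ⟨p + q, fun t => by rw [Polynomial.coeff_add]; exact add_mem (hp t) (hq t), by simp⟩
  | mul x y hx hy ihx ihy =>
    obtain ⟨p, hp, rfl⟩ := ihx
    obtain ⟨q, hq, rfl⟩ := ihy
    refine ⟨p * q, fun t => ?_, by simp⟩
    rw [Polynomial.coeff_mul]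
    exact Subalgebra.sum_mem _ fun st _ => mul_mem (hp st.1) (hq st.2)
lemma algEquiv_polyEval (ψ : MvPolynomial (Fin n) k ≃ₐ[k] MvPolynomial (Fin n) k)
    (p : Polynomial (MvPolynomial (Fin n) k)) (x : MvPolynomial (Fin n) k) :
    ψ (p.eval x) = (p.map (ψ : MvPolynomial (Fin n) k →+* MvPolynomial (Fin n) k)).eval (ψ x) := by
  rw [Polynomial.eval_map]
  exact (Polynomial.eval₂_hom (ψ : MvPolynomial (Fin n) k →+* MvPolynomial (Fin n) k) x).symm

lemma map_Asub_eq (ψ : MvPolynomial (Fin n) k ≃ₐ[k] MvPolynomial (Fin n) k)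
    (hsub : ∀ j ≤ n,
      (Asub k n j).map (ψ : MvPolynomial (Fin n) k →ₐ[k] MvPolynomial (Fin n) k) ≤ Asub k n j) :
    ∀ j ≤ n,
      (Asub k n j).map (ψ : MvPolynomial (Fin n) k →ₐ[k] MvPolynomial (Fin n) k) = Asub k n j := by
  suffices H : ∀ (d : ℕ) (j : ℕ), j + d = n →
      (Asub k n j).map (ψ : MvPolynomial (Fin n) k →ₐ[k] MvPolynomial (Fin n) k) = Asub k n j by
    intro j hj
    exact H (n - j) j (by omega)
  intro d
  induction d with
  | zero =>
    intro j hj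
    have hjn : j = n := by omega
    subst hjn
    rw [Asub_top]
    ext x
    simp only [Subalgebra.mem_map, Algebra.mem_top, iff_true]
    exact ⟨ψ.symm x, trivial, ψ.apply_symm_apply x⟩
  | succ d ih =>
    intro j hj
    have hIH : (Asub k n (j + 1)).map
        (ψ : MvPolynomial (Fin n) k →ₐ[k] MvPolynomial (Fin n) k) = Asub k n (j + 1) :=
      ih (j + 1) (by omega)
    set jF : Fin n := ⟨j, by omega⟩ with hjFdef
    have hjF : (jF : ℕ) = j := rfl
    set f : MvPolynomial (Fin n) k := ψ (X jF) with hfdef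
    have hfmem : f ∈ Asub k n (j + 1) :=
      hsub (j + 1) (by omega) ⟨X jF, X_mem_Asub k n (by omega), rfl⟩
    -- a generic element of `Asub (j+1)`, i.e. anything in the image of `ψ` on `Asub (j+1)`,
    -- is a polynomial in `f` with coefficients in `map ψ (Asub j)`
    have hgen : ∀ g' ∈ Asub k n (j + 1), ∃ q : Polynomial (MvPolynomial (Fin n) k),
        (∀ t, q.coeff t ∈ (Asub k n j).map
          (ψ : MvPolynomial (Fin n) k →ₐ[k] MvPolynomial (Fin n) k)) ∧ q.eval f = ψ g' := by
      intro g' hg'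
      obtain ⟨p, hp, hpe⟩ := exists_poly_of_mem_Asub_succ k n hjF hg'
      refine ⟨p.map (ψ : MvPolynomial (Fin n) k →+* MvPolynomial (Fin n) k), fun t => ?_, ?_⟩
      · rw [Polynomial.coeff_map]
        exact ⟨p.coeff t, hp t, rfl⟩
      · rw [← algEquiv_polyEval, hpe]
    -- the key degree fact: `thetaHom jF f` is nonconstant
    have hθf : (thetaHom k n jF f).natDegree ≠ 0 := by
      intro h0
      have hfj : f ∈ Asub k n j := by
        apply mem_Asub_of_thetaHom_natDegree_zero k n hjF hfmem
        exact h0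
      -- then X jF would lie in Asub j
      have hXin : X jF ∈ (Asub k n (j + 1)).map
          (ψ : MvPolynomial (Fin n) k →ₐ[k] MvPolynomial (Fin n) k) := by
        rw [hIH]; exact X_mem_Asub k n (by omega)
      obtain ⟨h', hh', hψh'0⟩ := hXin
      have hψh' : ψ h' = X jF := hψh'0
      obtain ⟨q, hq, hqe⟩ := hgen h' hh'
      have : X jF ∈ Asub k n j := by
        rw [← hψh', ← hqe]
        apply polyEval_mem
        · intro t
          exact hsub j (by omega) (hq t)
        · exact hfj
      exact X_not_mem_Asub k n (by omega) this
    apply le_antisymm (hsub j (by omega))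
    intro g hg
    have hg1 : g ∈ Asub k n (j + 1) := Asub_mono k n (by omega) hg
    rw [← hIH] at hg1
    obtain ⟨h', hh', hψh'0⟩ := hg1
    have hψh' : ψ h' = g := hψh'0
    obtain ⟨q, hq, hqe⟩ := hgen h' hh'
    rw [hψh'] at hqe
    -- apply thetaHom to the identity g = q.eval f
    have hqC : ∀ t, thetaHom k n jF (q.coeff t) = Polynomial.C (q.coeff t) := by
      intro t
      apply thetaHom_C_of_mem
      rw [hjF]
      exact hsub j (by omega) (hq t)
    have hcomp : Polynomial.C g = q.comp (thetaHom k n jF f) := by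
      have h1 : thetaHom k n jF g = Polynomial.C g := by
        apply thetaHom_C_of_mem; rw [hjF]; exact hg
      have h2 : thetaHom k n jF (q.eval f) = Polynomial.eval₂
          ((thetaHom k n jF : MvPolynomial (Fin n) k →ₐ[k] Polynomial (MvPolynomial (Fin n) k)) :
            MvPolynomial (Fin n) k →+* Polynomial (MvPolynomial (Fin n) k))
          (thetaHom k n jF f) q :=
        (Polynomial.eval₂_hom _ _).symm
      have h3 : Polynomial.eval₂
          ((thetaHom k n jF : MvPolynomial (Fin n) k →ₐ[k] Polynomial (MvPolynomial (Fin n) k)) :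
            MvPolynomial (Fin n) k →+* Polynomial (MvPolynomial (Fin n) k))
          (thetaHom k n jF f) q =
          Polynomial.eval₂ (Polynomial.C :
            MvPolynomial (Fin n) k →+* Polynomial (MvPolynomial (Fin n) k))
          (thetaHom k n jF f) q := by
        rw [Polynomial.eval₂_eq_eval_map, Polynomial.eval₂_eq_eval_map]
        congr 1
        apply Polynomial.ext
        intro t
        rw [Polynomial.coeff_map, Polynomial.coeff_map]
        exact hqC t
      rw [← h1, ← hqe, h2, h3]
      rfl
    have hdeg := congrArg Polynomial.natDegree hcomp
    rw [Polynomial.natDegree_C, Polynomial.natDegree_comp] at hdeg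
    have hqdeg2 : q.natDegree = 0 := by
      rcases Nat.mul_eq_zero.mp hdeg.symm with h | h
      · exact h
      · exact absurd h hθf
    have hqc : q = Polynomial.C (q.coeff 0) :=
      Polynomial.eq_C_of_natDegree_le_zero (le_of_eq hqdeg2)
    rw [← hqe, hqc, Polynomial.eval_C]
    exact hq 0

/-- If `φ` conjugates the unipotent Jonquières group into itself, then `φ ∈ Jonq(n)`. -/
theorem mem_jonq_of_conj_jonqU [IsAlgClosed k] (hn : 1 ≤ n)
    (φ : MvPolynomial (Fin n) k ≃ₐ[k] MvPolynomial (Fin n) k)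
    (h : ∀ u ∈ JonqU k n, φ * u * φ⁻¹ ∈ JonqU k n) :
    φ ∈ Jonq k n := by
  -- core of the strong induction: triangularity of `φ.symm` at index `i`
  have core : ∀ i : Fin n,
      (∀ m : Fin n, (m : ℕ) < (i : ℕ) → φ.symm (X m) ∈ Asub k n ((m : ℕ) + 1)) →
      φ.symm (X i) ∈ Asub k n ((i : ℕ) + 1) := by
    intro i IH
    have hψA : ∀ p ∈ Asub k n (i : ℕ), φ.symm p ∈ Asub k n (i : ℕ) := by
      intro p hp
      have hle : Asub k n (i : ℕ) ≤ (Asub k n (i : ℕ)).comap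
          (φ.symm : MvPolynomial (Fin n) k →ₐ[k] MvPolynomial (Fin n) k) := by
        rw [Asub, Algebra.adjoin_le_iff]
        rintro P ⟨m, hm, rfl⟩
        show φ.symm (X m) ∈ Asub k n (i : ℕ)
        exact Asub_mono k n hm (IH m hm)
      exact hle hp
    have Hkey : ∀ l : Fin n, (i : ℕ) < (l : ℕ) →
        ∀ m ∈ (φ.symm (X i)).support, m l = 0 := by
      intro l hil
      apply key_extraction k n i l hil (φ.symm (X i))
      intro f hf
      have hu := shiftEquiv_mem_JonqU k n l f hf
      obtain ⟨hvJ, hvU⟩ := h _ hu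
      have h1 := hvU i
      have h2 : (φ * shiftEquiv k n l f hf * φ⁻¹) (X i)
          = φ (shiftEquiv k n l f hf (φ⁻¹ (X i))) := by
        rw [AlgEquiv.mul_apply, AlgEquiv.mul_apply]
      have h3 : (φ⁻¹ : MvPolynomial (Fin n) k ≃ₐ[k] MvPolynomial (Fin n) k) (X i)
          = φ.symm (X i) := rfl
      rw [h2, h3] at h1
      have h4 : φ (shiftHom k n l f (φ.symm (X i)) - φ.symm (X i)) ∈ Asub k n (i : ℕ) := by
        rw [map_sub, φ.apply_symm_apply]
        exact h1
      have h5 := hψA _ h4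
      rwa [φ.symm_apply_apply] at h5
    rw [mem_Asub_iff_vars]
    intro l hl
    by_contra hc
    push_neg at hc
    have hil : (i : ℕ) < (l : ℕ) := by omega
    obtain ⟨m, hm, hml⟩ := (MvPolynomial.mem_vars l).mp hl
    exact (Finsupp.mem_support_iff.mp hml) (Hkey l hil m hm)
  -- strong induction over the index
  have hall : ∀ i : Fin n, φ.symm (X i) ∈ Asub k n ((i : ℕ) + 1) := by
    have H : ∀ N : ℕ, ∀ i : Fin n, (i : ℕ) ≤ N → φ.symm (X i) ∈ Asub k n ((i : ℕ) + 1) := by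
      intro N
      induction N with
      | zero =>
        intro i hi
        apply core i
        intro m hm
        omega
      | succ N ih =>
        intro i hi
        rcases Nat.lt_or_ge (i : ℕ) (N + 1) with hlt | hge
        · exact ih i (by omega)
        · apply core i
          intro m hm
          exact ih m (by omega)
    intro i
    exact H (i : ℕ) i le_rfl
  have hsub : ∀ j ≤ n, (Asub k n j).map
      (φ.symm : MvPolynomial (Fin n) k →ₐ[k] MvPolynomial (Fin n) k) ≤ Asub k n j := by
    intro j hj
    rw [Asub, AlgHom.map_adjoin, Algebra.adjoin_le_iff]
    rintro P ⟨Q, ⟨m, hm, rfl⟩, rfl⟩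
    show φ.symm (X m) ∈ Asub k n j
    exact Asub_mono k n hm (hall m)
  have hmap := map_Asub_eq k n φ.symm hsub
  rw [mem_Jonq_iff]
  intro j hj
  conv_lhs => rw [← hmap j hj]
  rw [Subalgebra.map_map]
  have hcomp : ((φ : MvPolynomial (Fin n) k →ₐ[k] MvPolynomial (Fin n) k).comp
      (φ.symm : MvPolynomial (Fin n) k →ₐ[k] MvPolynomial (Fin n) k)) = AlgHom.id k _ :=
    AlgHom.ext fun x => φ.apply_symm_apply x
  rw [hcomp, Subalgebra.map_id]

end
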